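/- arXiv:2202.04628 — 4 statements merged into one kernel-verified Lean document; each statement's English description precedes it below -/
import Mathlib

section
/- Performance Difference Lemma: For any two policies π and π̃ of the fixed finite discounted MDP, J_R(π) − J_R(π̃) = (1−γ)^{-1} ∑_s d^π(s) ∑_a π(s,a) A_R^{π̃}(s,a). -/
/-!
Let `q t` be the time-`t` state distribution of `π` and `V` the value function of `π̃`.
Since `∑ₛ q (t+1) s V s` is the expectation of `∑ₛ' P(s'|s,a) V s'` under `q t` and `π`,
the expected advantage `∑ₛ q t s ∑ₐ π(s,a) A(s,a)` equals `r t + γ ⟨q (t+1), V⟩ - ⟨q t, V⟩`,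
where `r t` is the expected reward at time `t`, so its discounted sum telescopes to
`J(π) - ⟨μ, V⟩`. For `π̃` itself the averaged advantage vanishes by the Bellman equation,
which gives `J(π̃) = ⟨μ, V⟩`.
-/

open Finset

/-- Time-`t` state distribution of policy `π` in the MDP with transitions `P`
and initial distribution `μ`. -/
noncomputable def pDist {S A : Type*} [Fintype S] [Fintype A]
    (P : S → A → S → ℝ) (μ : S → ℝ) (π : S → A → ℝ) : ℕ → S → ℝ
  | 0 => μ
  | t + 1 => fun s' => ∑ s, ∑ a, pDist P μ π t s * π s a * P s a s'

/-- Discounted state visitation distribution `d^π`. -/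
noncomputable def dvisit {S A : Type*} [Fintype S] [Fintype A]
    (P : S → A → S → ℝ) (μ : S → ℝ) (γ : ℝ) (π : S → A → ℝ) (s : S) : ℝ :=
  (1 - γ) * ∑' t : ℕ, γ ^ t * pDist P μ π t s

/-- Discounted return `J_R(π)`. -/
noncomputable def Jret {S A : Type*} [Fintype S] [Fintype A]
    (P : S → A → S → ℝ) (μ : S → ℝ) (γ : ℝ) (R : S → A → ℝ) (π : S → A → ℝ) : ℝ :=
  ∑' t : ℕ, γ ^ t * ∑ s, ∑ a, pDist P μ π t s * π s a * R s a

/-- Advantage function `A_R^π(s,a) = Q_R^π(s,a) - V_R^π(s)`, expressed in terms of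
the value function `V` of the policy. -/
noncomputable def Adv {S A : Type*} [Fintype S]
    (P : S → A → S → ℝ) (γ : ℝ) (R : S → A → ℝ) (V : S → ℝ) (s : S) (a : A) : ℝ :=
  (R s a + γ * ∑ s', P s a s' * V s') - V s

/-- KL divergence between two distributions on a finite type. -/
noncomputable def KL {X : Type*} [Fintype X] (p q : X → ℝ) : ℝ :=
  ∑ x, p x * Real.log (p x / q x)

/-- Total variation distance between two distributions on a finite type. -/
noncomputable def TV {X : Type*} [Fintype X] (p q : X → ℝ) : ℝ :=
  (1 / 2) * ∑ x, |p x - q x|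

theorem HasSum.add_sub_telescope {G : Type*} [AddCommGroup G] [TopologicalSpace G]
    [IsTopologicalAddGroup G] {f u : ℕ → G} {a b : G} (hf : HasSum f a) (hu : HasSum u b) :
    HasSum (fun t => f t + (u (t + 1) - u t)) (a - u 0) := by
  have hshift : HasSum (fun t => u (t + 1)) (b - u 0) := by
    simpa using (hasSum_nat_add_iff' 1).mpr hu
  convert hf.add (hshift.sub hu) using 1
  abel

namespace pDist

variable {S A : Type*} [Fintype S] [Fintype A] {P : S → A → S → ℝ} {μ : S → ℝ}
  {ρ : S → A → ℝ}

theorem nonneg (hP0 : ∀ s a s', 0 ≤ P s a s') (hμ0 : ∀ s, 0 ≤ μ s)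
    (hρ0 : ∀ s a, 0 ≤ ρ s a) (t : ℕ) (s : S) : 0 ≤ pDist P μ ρ t s := by
  induction t generalizing s with
  | zero => exact hμ0 s
  | succ t ih =>
    exact sum_nonneg fun s _ => sum_nonneg fun a _ =>
      mul_nonneg (mul_nonneg (ih s) (hρ0 s a)) (hP0 s a _)

theorem sum_succ_mul (V : S → ℝ) (t : ℕ) :
    ∑ s, pDist P μ ρ (t + 1) s * V s
      = ∑ s, ∑ a, pDist P μ ρ t s * ρ s a * ∑ s', P s a s' * V s' := by
  simp only [pDist, sum_mul, mul_sum]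
  rw [sum_comm]
  refine sum_congr rfl fun s _ => ?_
  rw [sum_comm]
  exact sum_congr rfl fun a _ => sum_congr rfl fun s' _ => by ring

theorem sum_eq_sum_init (hP1 : ∀ s a, ∑ s', P s a s' = 1) (hρ1 : ∀ s, ∑ a, ρ s a = 1) (t : ℕ) :
    ∑ s, pDist P μ ρ t s = ∑ s, μ s := by
  induction t with
  | zero => rfl
  | succ t ih =>
    rw [← ih]
    simpa [hP1, ← mul_sum, hρ1] using sum_succ_mul (P := P) (μ := μ) (ρ := ρ) (fun _ => 1) t

variable (hP0 : ∀ s a s', 0 ≤ P s a s') (hP1 : ∀ s a, ∑ s', P s a s' = 1)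
  (hμ0 : ∀ s, 0 ≤ μ s) (hρ0 : ∀ s a, 0 ≤ ρ s a) (hρ1 : ∀ s, ∑ a, ρ s a = 1)
include hP0 hP1 hμ0 hρ0 hρ1

theorem le_sum_init (t : ℕ) (s : S) : pDist P μ ρ t s ≤ ∑ s, μ s :=
  sum_eq_sum_init hP1 hρ1 t ▸ single_le_sum (fun s _ => nonneg hP0 hμ0 hρ0 t s) (mem_univ s)

theorem summable_geometric_mul {γ : ℝ} (hγ0 : 0 ≤ γ) (hγ1 : γ < 1) (s : S) :
    Summable fun t => γ ^ t * pDist P μ ρ t s :=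
  ((summable_geometric_of_lt_one hγ0 hγ1).mul_right (∑ s, μ s)).of_nonneg_of_le
    (fun t => mul_nonneg (pow_nonneg hγ0 t) (nonneg hP0 hμ0 hρ0 t s))
    (fun t => mul_le_mul_of_nonneg_left (le_sum_init hP0 hP1 hμ0 hρ0 hρ1 t s) (pow_nonneg hγ0 t))

theorem summable_geometric_mul_sum {γ : ℝ} (hγ0 : 0 ≤ γ) (hγ1 : γ < 1) (c : S → ℝ) :
    Summable fun t => γ ^ t * ∑ s, pDist P μ ρ t s * c s := by
  simp only [mul_sum, ← mul_assoc]
  exact summable_sum fun s _ =>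
    (summable_geometric_mul hP0 hP1 hμ0 hρ0 hρ1 hγ0 hγ1 s).mul_right (c s)

end pDist

section PerformanceDifference

variable {S A : Type*} [Fintype S] [Fintype A] {P : S → A → S → ℝ} {μ : S → ℝ}
  {ρ : S → A → ℝ} {γ : ℝ} {R : S → A → ℝ}

theorem sum_mul_Adv (hρ1 : ∀ s, ∑ a, ρ s a = 1) (V : S → ℝ) (s : S) :
    ∑ a, ρ s a * Adv P γ R V s a
      = ∑ a, ρ s a * (R s a + γ * ∑ s', P s a s' * V s') - V s := by
  simp only [Adv, mul_sub, sum_sub_distrib, ← sum_mul, hρ1, one_mul]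

theorem sum_pDist_mul_sum_mul_Adv (hρ1 : ∀ s, ∑ a, ρ s a = 1) (V : S → ℝ) (t : ℕ) :
    ∑ s, pDist P μ ρ t s * ∑ a, ρ s a * Adv P γ R V s a
      = ∑ s, ∑ a, pDist P μ ρ t s * ρ s a * R s a
        + γ * ∑ s, pDist P μ ρ (t + 1) s * V s - ∑ s, pDist P μ ρ t s * V s := by
  have hstate : ∀ s, pDist P μ ρ t s * ∑ a, ρ s a * (R s a + γ * ∑ s', P s a s' * V s')
      = ∑ a, pDist P μ ρ t s * ρ s a * R s a
        + γ * ∑ a, pDist P μ ρ t s * ρ s a * ∑ s', P s a s' * V s' := by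
    intro s
    rw [mul_sum, mul_sum, ← sum_add_distrib]
    exact sum_congr rfl fun a _ => by ring
  simp only [sum_mul_Adv hρ1, mul_sub, hstate, sum_sub_distrib, sum_add_distrib, ← mul_sum,
    pDist.sum_succ_mul]

theorem hasSum_discounted_advantage (hP0 : ∀ s a s', 0 ≤ P s a s')
    (hP1 : ∀ s a, ∑ s', P s a s' = 1) (hμ0 : ∀ s, 0 ≤ μ s) (hρ0 : ∀ s a, 0 ≤ ρ s a)
    (hρ1 : ∀ s, ∑ a, ρ s a = 1) (hγ0 : 0 ≤ γ) (hγ1 : γ < 1) (V : S → ℝ) :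
    HasSum (fun t => γ ^ t * ∑ s, pDist P μ ρ t s * ∑ a, ρ s a * Adv P γ R V s a)
      (Jret P μ γ R ρ - ∑ s, μ s * V s) := by
  have hreward : HasSum (fun t => γ ^ t * ∑ s, ∑ a, pDist P μ ρ t s * ρ s a * R s a)
      (Jret P μ γ R ρ) := by
    refine Summable.hasSum ?_
    simpa only [mul_sum, mul_assoc] using
      pDist.summable_geometric_mul_sum hP0 hP1 hμ0 hρ0 hρ1 hγ0 hγ1 fun s => ∑ a, ρ s a * R s a
  have hvalue := pDist.summable_geometric_mul_sum hP0 hP1 hμ0 hρ0 hρ1 hγ0 hγ1 V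
  have htelescope := hreward.add_sub_telescope hvalue.hasSum
  rw [pow_zero, one_mul] at htelescope
  refine htelescope.congr_fun fun t => ?_
  rw [sum_pDist_mul_sum_mul_Adv hρ1, pow_succ]
  ring

theorem Jret_eq_sum_mul_of_bellman (hP0 : ∀ s a s', 0 ≤ P s a s')
    (hP1 : ∀ s a, ∑ s', P s a s' = 1) (hμ0 : ∀ s, 0 ≤ μ s) (hρ0 : ∀ s a, 0 ≤ ρ s a)
    (hρ1 : ∀ s, ∑ a, ρ s a = 1) (hγ0 : 0 ≤ γ) (hγ1 : γ < 1) {V : S → ℝ}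
    (hV : ∀ s, V s = ∑ a, ρ s a * (R s a + γ * ∑ s', P s a s' * V s')) :
    Jret P μ γ R ρ = ∑ s, μ s * V s := by
  have h := hasSum_discounted_advantage (R := R) hP0 hP1 hμ0 hρ0 hρ1 hγ0 hγ1 V
  simp only [sum_mul_Adv hρ1, ← hV, sub_self, mul_zero, sum_const_zero] at h
  exact sub_eq_zero.mp (h.unique hasSum_zero)

theorem sum_dvisit_mul (hsum : ∀ s, Summable fun t => γ ^ t * pDist P μ ρ t s) (c : S → ℝ) :
    ∑ s, dvisit P μ γ ρ s * c s = (1 - γ) * ∑' t, γ ^ t * ∑ s, pDist P μ ρ t s * c s := by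
  calc ∑ s, dvisit P μ γ ρ s * c s
      = (1 - γ) * ∑ s, ∑' t, γ ^ t * pDist P μ ρ t s * c s := by
        simp only [dvisit, mul_sum, ← tsum_mul_right, mul_assoc]
    _ = (1 - γ) * ∑' t, ∑ s, γ ^ t * pDist P μ ρ t s * c s := by
        rw [Summable.tsum_finsetSum fun s _ => (hsum s).mul_right (c s)]
    _ = (1 - γ) * ∑' t, γ ^ t * ∑ s, pDist P μ ρ t s * c s := by
        simp only [mul_sum, mul_assoc]

end PerformanceDifference

theorem stmt_0_general {S A : Type*} [Fintype S] [Fintype A]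
    (R : S → A → ℝ) (P : S → A → S → ℝ)
    (hP0 : ∀ s a s', 0 ≤ P s a s') (hP1 : ∀ s a, ∑ s', P s a s' = 1)
    (γ : ℝ) (hγ0 : 0 < γ) (hγ1 : γ < 1)
    (μ : S → ℝ) (hμ0 : ∀ s, 0 ≤ μ s)
    (π πt : S → A → ℝ)
    (hπ0 : ∀ s a, 0 ≤ π s a) (hπ1 : ∀ s, ∑ a, π s a = 1)
    (hπt0 : ∀ s a, 0 ≤ πt s a) (hπt1 : ∀ s, ∑ a, πt s a = 1)
    (Vt : S → ℝ)
    (hVt : ∀ s, Vt s = ∑ a, πt s a * (R s a + γ * ∑ s', P s a s' * Vt s')) :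
    Jret P μ γ R π - Jret P μ γ R πt =
      (1 - γ)⁻¹ * ∑ s, dvisit P μ γ π s * ∑ a, π s a * Adv P γ R Vt s a := by
  rw [sum_dvisit_mul (pDist.summable_geometric_mul hP0 hP1 hμ0 hπ0 hπ1 hγ0.le hγ1),
    (hasSum_discounted_advantage hP0 hP1 hμ0 hπ0 hπ1 hγ0.le hγ1 Vt).tsum_eq,
    Jret_eq_sum_mul_of_bellman hP0 hP1 hμ0 hπt0 hπt1 hγ0.le hγ1 hVt,
    inv_mul_cancel_left₀ (sub_ne_zero.mpr hγ1.ne')]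

/-- **Performance Difference Lemma.** For any two policies `π` and `π̃` of a finite
discounted MDP, `J_R(π) − J_R(π̃) = (1−γ)⁻¹ ∑_s d^π(s) ∑_a π(s,a) A_R^{π̃}(s,a)`. -/
theorem stmt_0 {S A : Type*} [Fintype S] [Fintype A] [Nonempty S] [Nonempty A]
    (R : S → A → ℝ) (P : S → A → S → ℝ)
    (hP0 : ∀ s a s', 0 ≤ P s a s') (hP1 : ∀ s a, ∑ s', P s a s' = 1)
    (γ : ℝ) (hγ0 : 0 < γ) (hγ1 : γ < 1)
    (μ : S → ℝ) (hμ0 : ∀ s, 0 ≤ μ s) (hμ1 : ∑ s, μ s = 1)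
    (π πt : S → A → ℝ)
    (hπ0 : ∀ s a, 0 ≤ π s a) (hπ1 : ∀ s, ∑ a, π s a = 1)
    (hπt0 : ∀ s a, 0 ≤ πt s a) (hπt1 : ∀ s, ∑ a, πt s a = 1)
    (Vt : S → ℝ)
    (hVt : ∀ s, Vt s = ∑ a, πt s a * (R s a + γ * ∑ s', P s a s' * Vt s')) :
    Jret P μ γ R π - Jret P μ γ R πt =
      (1 - γ)⁻¹ * ∑ s, dvisit P μ γ π s * ∑ a, π s a * Adv P γ R Vt s a :=
  stmt_0_general R P hP0 hP1 γ hγ0 hγ1 μ hμ0 π πt hπ0 hπ1 hπt0 hπt1 Vt hVt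
end

section
/- For any two policies π and π̃ of the fixed finite discounted MDP, |J_R(π) − J_R(π̃)| ≤ (3 R_max/(1−γ)²) D^max_TV(π, π̃), where R_max = max_{s,a} |R(s,a)|. -/
open Finset

/-! The occupancy measures `p_t^π(s) π(s,a)` and `p_t^π̃(s) π̃(s,a)` are at `ℓ¹`-distance at most
`2t ε + 2ε`, where `ε = D^max_TV(π, π̃)`: passing through the transition kernel is an `ℓ¹`
contraction, so the state marginals drift apart by at most `2ε` per step, and replacing the
policy adds another `2ε`. Hence the expected rewards at time `t` differ by at most
`2 R_max ε (t + 1)`, and summing against `γ^t` with `∑ (t + 1) γ^t = 1/(1 - γ)²` gives the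
bound. -/

section

variable {S A T : Type*} [Fintype S] [Fintype A] [Fintype T]

lemma TV_nonneg (p q : T → ℝ) : 0 ≤ TV p q := by
  unfold TV
  positivity

lemma sum_sum_sum_mul_of_sum_eq_one {P : S → A → T → ℝ} (hP : ∀ s a, ∑ t, P s a t = 1)
    (y : S → A → ℝ) : ∑ t, ∑ s, ∑ a, y s a * P s a t = ∑ s, ∑ a, y s a := by
  rw [sum_comm]
  refine sum_congr rfl fun s _ => ?_
  rw [sum_comm]
  simp only [← mul_sum, hP, mul_one]

lemma sum_abs_sum_sum_mul_le {P : S → A → T → ℝ} (hP : ∀ s a, P s a ∈ stdSimplex ℝ T)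
    (x : S → A → ℝ) : ∑ t, |∑ s, ∑ a, x s a * P s a t| ≤ ∑ s, ∑ a, |x s a| :=
  calc ∑ t, |∑ s, ∑ a, x s a * P s a t|
      ≤ ∑ t, ∑ s, ∑ a, |x s a| * P s a t := by
        gcongr with t
        refine (abs_sum_le_sum_abs _ _).trans (sum_le_sum fun s _ => ?_)
        refine (abs_sum_le_sum_abs _ _).trans_eq (sum_congr rfl fun a _ => ?_)
        rw [abs_mul, abs_of_nonneg ((hP s a).1 t)]
    _ = ∑ s, ∑ a, |x s a| := sum_sum_sum_mul_of_sum_eq_one (fun s a => (hP s a).2) _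

lemma abs_sum_sum_mul_le {R : S → A → ℝ} {M : ℝ} (hR : ∀ s a, |R s a| ≤ M)
    (x : S → A → ℝ) : |∑ s, ∑ a, x s a * R s a| ≤ (∑ s, ∑ a, |x s a|) * M := by
  simp only [sum_mul]
  refine (abs_sum_le_sum_abs _ _).trans (sum_le_sum fun s _ => ?_)
  refine (abs_sum_le_sum_abs _ _).trans (sum_le_sum fun a _ => ?_)
  rw [abs_mul]
  exact mul_le_mul_of_nonneg_left (hR s a) (abs_nonneg _)

lemma sum_sum_abs_mul_sub_mul_le {p q : S → ℝ} {π π' : S → A → ℝ} {ε : ℝ}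
    (hq : q ∈ stdSimplex ℝ S) (hπ : ∀ s, π s ∈ stdSimplex ℝ A)
    (hε : ∀ s, TV (π s) (π' s) ≤ ε) :
    ∑ s, ∑ a, |p s * π s a - q s * π' s a| ≤ ∑ s, |p s - q s| + 2 * ε := by
  have hstate : ∀ s, ∑ a, |p s * π s a - q s * π' s a| ≤ |p s - q s| + q s * (2 * ε) := by
    intro s
    calc ∑ a, |p s * π s a - q s * π' s a|
        ≤ ∑ a, (|p s - q s| * π s a + q s * |π s a - π' s a|) := by
          refine sum_le_sum fun a _ => ?_
          rw [show p s * π s a - q s * π' s a = (p s - q s) * π s a + q s * (π s a - π' s a) by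
            ring]
          refine (abs_add_le _ _).trans_eq ?_
          rw [abs_mul, abs_mul, abs_of_nonneg ((hπ s).1 a), abs_of_nonneg (hq.1 s)]
      _ = |p s - q s| + q s * (2 * TV (π s) (π' s)) := by
          rw [sum_add_distrib, ← mul_sum, ← mul_sum, (hπ s).2, TV]
          ring
      _ ≤ |p s - q s| + q s * (2 * ε) := by
          gcongr
          · exact hq.1 s
          · exact hε s
  calc ∑ s, ∑ a, |p s * π s a - q s * π' s a|
      ≤ ∑ s, (|p s - q s| + q s * (2 * ε)) := sum_le_sum fun s _ => hstate s
    _ = ∑ s, |p s - q s| + 2 * ε := by rw [sum_add_distrib, ← sum_mul, hq.2, one_mul]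

end

section

variable {S A : Type*} [Fintype S] [Fintype A]
  {P : S → A → S → ℝ} {μ : S → ℝ} {π π' : S → A → ℝ}

lemma pDist_mem_stdSimplex (hP : ∀ s a, P s a ∈ stdSimplex ℝ S) (hμ : μ ∈ stdSimplex ℝ S)
    (hπ : ∀ s, π s ∈ stdSimplex ℝ A) : ∀ t, pDist P μ π t ∈ stdSimplex ℝ S
  | 0 => hμ
  | t + 1 => by
    obtain ⟨hp0, hp1⟩ := pDist_mem_stdSimplex hP hμ hπ t
    refine ⟨fun s' => sum_nonneg fun s _ => sum_nonneg fun a _ => ?_, ?_⟩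
    · exact mul_nonneg (mul_nonneg (hp0 s) ((hπ s).1 a)) ((hP s a).1 s')
    · simp only [pDist]
      rw [sum_sum_sum_mul_of_sum_eq_one (fun s a => (hP s a).2)]
      simp only [← mul_sum, (hπ _).2, mul_one, hp1]

lemma sum_abs_pDist_sub_le {ε : ℝ} (hP : ∀ s a, P s a ∈ stdSimplex ℝ S)
    (hμ : μ ∈ stdSimplex ℝ S) (hπ : ∀ s, π s ∈ stdSimplex ℝ A)
    (hπ' : ∀ s, π' s ∈ stdSimplex ℝ A) (hε : ∀ s, TV (π s) (π' s) ≤ ε) :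
    ∀ t : ℕ, ∑ s, |pDist P μ π t s - pDist P μ π' t s| ≤ 2 * t * ε
  | 0 => by simp [pDist]
  | t + 1 =>
    calc ∑ s', |pDist P μ π (t + 1) s' - pDist P μ π' (t + 1) s'|
        = ∑ s', |∑ s, ∑ a,
            (pDist P μ π t s * π s a - pDist P μ π' t s * π' s a) * P s a s'| := by
          simp only [pDist, ← sum_sub_distrib, sub_mul]
      _ ≤ ∑ s, ∑ a, |pDist P μ π t s * π s a - pDist P μ π' t s * π' s a| :=
          sum_abs_sum_sum_mul_le hP _
      _ ≤ ∑ s, |pDist P μ π t s - pDist P μ π' t s| + 2 * ε :=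
          sum_sum_abs_mul_sub_mul_le (pDist_mem_stdSimplex hP hμ hπ' t) hπ hε
      _ ≤ 2 * t * ε + 2 * ε := by
          gcongr
          exact sum_abs_pDist_sub_le hP hμ hπ hπ' hε t
      _ = 2 * ↑(t + 1) * ε := by
          push_cast
          ring

/-- `Jret P μ γ R π` unfolds to `∑' t, γ ^ t * expectedReward P μ R π t`. -/
noncomputable def expectedReward (P : S → A → S → ℝ) (μ : S → ℝ) (R : S → A → ℝ)
    (π : S → A → ℝ) (t : ℕ) : ℝ :=
  ∑ s, ∑ a, pDist P μ π t s * π s a * R s a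

variable {R : S → A → ℝ} {M : ℝ}

lemma abs_expectedReward_le (hP : ∀ s a, P s a ∈ stdSimplex ℝ S) (hμ : μ ∈ stdSimplex ℝ S)
    (hπ : ∀ s, π s ∈ stdSimplex ℝ A) (hR : ∀ s a, |R s a| ≤ M) (t : ℕ) :
    |expectedReward P μ R π t| ≤ M := by
  obtain ⟨hp0, hp1⟩ := pDist_mem_stdSimplex hP hμ hπ t
  have hmass : ∑ s, ∑ a, |pDist P μ π t s * π s a| = 1 := by
    simp only [abs_mul, abs_of_nonneg (hp0 _), abs_of_nonneg ((hπ _).1 _), ← mul_sum,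
      (hπ _).2, mul_one, hp1]
  simpa only [expectedReward, hmass, one_mul] using
    abs_sum_sum_mul_le hR (fun s a => pDist P μ π t s * π s a)

lemma abs_expectedReward_sub_le {ε : ℝ} (hP : ∀ s a, P s a ∈ stdSimplex ℝ S)
    (hμ : μ ∈ stdSimplex ℝ S) (hπ : ∀ s, π s ∈ stdSimplex ℝ A)
    (hπ' : ∀ s, π' s ∈ stdSimplex ℝ A) (hε : ∀ s, TV (π s) (π' s) ≤ ε)
    (hR : ∀ s a, |R s a| ≤ M) (hM : 0 ≤ M) (t : ℕ) :
    |expectedReward P μ R π t - expectedReward P μ R π' t| ≤ 2 * M * ε * (t + 1) :=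
  calc |expectedReward P μ R π t - expectedReward P μ R π' t|
      = |∑ s, ∑ a, (pDist P μ π t s * π s a - pDist P μ π' t s * π' s a) * R s a| := by
        simp only [expectedReward, ← sum_sub_distrib, sub_mul]
    _ ≤ (∑ s, ∑ a, |pDist P μ π t s * π s a - pDist P μ π' t s * π' s a|) * M :=
        abs_sum_sum_mul_le hR _
    _ ≤ (2 * t * ε + 2 * ε) * M := by
        gcongr
        exact (sum_sum_abs_mul_sub_mul_le (pDist_mem_stdSimplex hP hμ hπ' t) hπ hε).trans
          (add_le_add_left (sum_abs_pDist_sub_le hP hμ hπ hπ' hε t) _)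
    _ = 2 * M * ε * (t + 1) := by ring

end

lemma hasSum_coe_add_one_mul_geometric {r : ℝ} (hr : |r| < 1) :
    HasSum (fun n : ℕ => ((n : ℝ) + 1) * r ^ n) (1 / (1 - r) ^ 2) := by
  have hr1 : 1 - r ≠ 0 := by linarith [le_abs_self r]
  have h := (hasSum_coe_mul_geometric_of_norm_lt_one hr).add (hasSum_geometric_of_abs_lt_one hr)
  rw [show r / (1 - r) ^ 2 + (1 - r)⁻¹ = 1 / (1 - r) ^ 2 by field_simp; ring] at h
  simpa only [add_mul, one_mul] using h

lemma abs_tsum_geometric_mul_sub_le {γ M c : ℝ} {a b : ℕ → ℝ} (hγ0 : 0 ≤ γ) (hγ1 : γ < 1)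
    (ha : ∀ t, |a t| ≤ M) (hb : ∀ t, |b t| ≤ M) (hab : ∀ t, |a t - b t| ≤ c * (t + 1)) :
    |∑' t, γ ^ t * a t - ∑' t, γ ^ t * b t| ≤ c / (1 - γ) ^ 2 := by
  have hγ : |γ| < 1 := by rwa [abs_of_nonneg hγ0]
  have hsummable : ∀ f : ℕ → ℝ, (∀ t, |f t| ≤ M) → Summable fun t => γ ^ t * f t :=
    fun f hf => ((summable_geometric_of_abs_lt_one hγ).mul_left M).of_norm_bounded fun t => by
      rw [Real.norm_eq_abs, abs_mul, abs_of_nonneg (pow_nonneg hγ0 t), mul_comm]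
      exact mul_le_mul_of_nonneg_right (hf t) (pow_nonneg hγ0 t)
  rw [← (hsummable a ha).tsum_sub (hsummable b hb), ← Real.norm_eq_abs, div_eq_mul_one_div]
  refine tsum_of_norm_bounded ((hasSum_coe_add_one_mul_geometric hγ).mul_left c) fun t => ?_
  rw [Real.norm_eq_abs, ← mul_sub, abs_mul, abs_of_nonneg (pow_nonneg hγ0 t)]
  calc γ ^ t * |a t - b t| ≤ γ ^ t * (c * (t + 1)) := by gcongr; exact hab t
    _ = c * ((t + 1) * γ ^ t) := by ring

theorem stmt_8_general {S A : Type*} [Fintype S] [Fintype A]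
    (R : S → A → ℝ) (P : S → A → S → ℝ)
    (hP0 : ∀ s a s', 0 ≤ P s a s') (hP1 : ∀ s a, ∑ s', P s a s' = 1)
    (γ : ℝ) (hγ0 : 0 < γ) (hγ1 : γ < 1)
    (μ : S → ℝ) (hμ0 : ∀ s, 0 ≤ μ s) (hμ1 : ∑ s, μ s = 1)
    (π πt : S → A → ℝ)
    (hπ0 : ∀ s a, 0 ≤ π s a) (hπ1 : ∀ s, ∑ a, π s a = 1)
    (hπt0 : ∀ s a, 0 ≤ πt s a) (hπt1 : ∀ s, ∑ a, πt s a = 1) :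
    |Jret P μ γ R π - Jret P μ γ R πt| ≤
      (3 * (⨆ s, ⨆ a, |R s a|) / (1 - γ) ^ 2) * (⨆ s, TV (π s) (πt s)) := by
  set M := ⨆ s, ⨆ a, |R s a|
  set ε := ⨆ s, TV (π s) (πt s)
  have hR : ∀ s a, |R s a| ≤ M := fun s a =>
    (le_ciSup (f := fun a => |R s a|) (Set.finite_range _).bddAbove a).trans
      (le_ciSup (f := fun s => ⨆ a, |R s a|) (Set.finite_range _).bddAbove s)
  have hε : ∀ s, TV (π s) (πt s) ≤ ε := le_ciSup (Set.finite_range _).bddAbove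
  have hM : 0 ≤ M := Real.iSup_nonneg fun s => Real.iSup_nonneg fun a => abs_nonneg _
  have hε0 : 0 ≤ ε := Real.iSup_nonneg fun s => TV_nonneg _ _
  have hP : ∀ s a, P s a ∈ stdSimplex ℝ S := fun s a => ⟨hP0 s a, hP1 s a⟩
  have hμ : μ ∈ stdSimplex ℝ S := ⟨hμ0, hμ1⟩
  have hπ : ∀ s, π s ∈ stdSimplex ℝ A := fun s => ⟨hπ0 s, hπ1 s⟩
  have hπt : ∀ s, πt s ∈ stdSimplex ℝ A := fun s => ⟨hπt0 s, hπt1 s⟩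
  calc |Jret P μ γ R π - Jret P μ γ R πt| ≤ 2 * M * ε / (1 - γ) ^ 2 :=
        abs_tsum_geometric_mul_sub_le hγ0.le hγ1 (abs_expectedReward_le hP hμ hπ hR)
          (abs_expectedReward_le hP hμ hπt hR) (abs_expectedReward_sub_le hP hμ hπ hπt hε hR hM)
    _ ≤ 3 * M / (1 - γ) ^ 2 * ε := by
        rw [div_mul_eq_mul_div]
        gcongr
        nlinarith [mul_nonneg hM hε0]

/-- For any two policies `π` and `π̃`,
`|J_R(π) − J_R(π̃)| ≤ (3 R_max/(1−γ)²) D^max_TV(π, π̃)` where `R_max = max_{s,a} |R(s,a)|`. -/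
theorem stmt_8 {S A : Type*} [Fintype S] [Fintype A] [Nonempty S] [Nonempty A]
    (R : S → A → ℝ) (P : S → A → S → ℝ)
    (hP0 : ∀ s a s', 0 ≤ P s a s') (hP1 : ∀ s a, ∑ s', P s a s' = 1)
    (γ : ℝ) (hγ0 : 0 < γ) (hγ1 : γ < 1)
    (μ : S → ℝ) (hμ0 : ∀ s, 0 ≤ μ s) (hμ1 : ∑ s, μ s = 1)
    (π πt : S → A → ℝ)
    (hπ0 : ∀ s a, 0 ≤ π s a) (hπ1 : ∀ s, ∑ a, π s a = 1)
    (hπt0 : ∀ s a, 0 ≤ πt s a) (hπt1 : ∀ s, ∑ a, πt s a = 1) :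
    |Jret P μ γ R π - Jret P μ γ R πt| ≤
      (3 * (⨆ s, ⨆ a, |R s a|) / (1 - γ) ^ 2) * (⨆ s, TV (π s) (πt s)) :=
  stmt_8_general R P hP0 hP1 γ hγ0 hγ1 μ hμ0 hμ1 π πt hπ0 hπ1 hπt0 hπt1
end

section
/- Let π_b be a behavior policy of the fixed finite discounted MDP with π_b(s,a) > 0 for all (s,a). For any policy π with π(s,a) > 0 for all (s,a), the discounted return of π under its own policy-dependent reward satisfies J_{C_π}(π) = (1−γ)^{-1} D^π_KL(π, π_b). -/
open Finset

/-! The inner action sum `∑ a, π(s,a) log (π(s,a)/π_b(s,a))` of the return under `C_π` is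
`KL(π(s,·), π_b(s,·))`, so exchanging the time series with the finite state sum writes
`J_{C_π}(π)` as `∑ s (∑ t γ^t p_t(s)) KL_s = (1-γ)⁻¹ ∑ s d^π(s) KL_s`. The exchange is legitimate
because each `p_t` is a probability distribution, so the series is dominated by `∑ γ^t`. -/

section StateDistribution

variable {S A : Type*} [Fintype S] [Fintype A]
  {P : S → A → S → ℝ} {μ : S → ℝ} {π : S → A → ℝ}

theorem pDist_nonneg (hP0 : ∀ s a s', 0 ≤ P s a s') (hμ0 : ∀ s, 0 ≤ μ s)
    (hπ0 : ∀ s a, 0 ≤ π s a) (t : ℕ) (s : S) : 0 ≤ pDist P μ π t s := by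
  induction t generalizing s with
  | zero => exact hμ0 s
  | succ t ih =>
    exact sum_nonneg fun s _ => sum_nonneg fun a _ =>
      mul_nonneg (mul_nonneg (ih s) (hπ0 s a)) (hP0 s a _)

theorem sum_pDist (hP1 : ∀ s a, ∑ s', P s a s' = 1) (hμ1 : ∑ s, μ s = 1)
    (hπ1 : ∀ s, ∑ a, π s a = 1) (t : ℕ) : ∑ s, pDist P μ π t s = 1 := by
  induction t with
  | zero => exact hμ1
  | succ t ih =>
    calc ∑ s', pDist P μ π (t + 1) s'
        = ∑ s, ∑ a, pDist P μ π t s * π s a * ∑ s', P s a s' := by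
          simp only [pDist, mul_sum]
          rw [sum_comm]
          exact sum_congr rfl fun s _ => sum_comm
      _ = 1 := by simp only [hP1, mul_one, ← mul_sum, hπ1, ih]

theorem summable_pow_mul_pDist (hP0 : ∀ s a s', 0 ≤ P s a s') (hP1 : ∀ s a, ∑ s', P s a s' = 1)
    (hμ0 : ∀ s, 0 ≤ μ s) (hμ1 : ∑ s, μ s = 1)
    (hπ0 : ∀ s a, 0 ≤ π s a) (hπ1 : ∀ s, ∑ a, π s a = 1)
    {γ : ℝ} (hγ0 : 0 ≤ γ) (hγ1 : γ < 1) (s : S) :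
    Summable fun t => γ ^ t * pDist P μ π t s := by
  have hnonneg := pDist_nonneg hP0 hμ0 hπ0
  have hle_one (t : ℕ) : pDist P μ π t s ≤ 1 :=
    sum_pDist hP1 hμ1 hπ1 t ▸ single_le_sum (fun s' _ => hnonneg t s') (mem_univ s)
  refine (summable_geometric_of_lt_one hγ0 hγ1).of_nonneg_of_le
    (fun t => mul_nonneg (pow_nonneg hγ0 t) (hnonneg t s)) fun t => ?_
  simpa using mul_le_mul_of_nonneg_left (hle_one t) (pow_nonneg hγ0 t)

theorem Jret_eq_inv_mul_sum_dvisit {γ : ℝ} (hγ1 : γ ≠ 1)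
    (hsum : ∀ s, Summable fun t => γ ^ t * pDist P μ π t s) (R : S → A → ℝ) :
    Jret P μ γ R π = (1 - γ)⁻¹ * ∑ s, dvisit P μ γ π s * ∑ a, π s a * R s a := by
  calc Jret P μ γ R π
      = ∑' t, ∑ s, γ ^ t * pDist P μ π t s * ∑ a, π s a * R s a := by
        simp only [Jret, mul_sum, mul_assoc]
    _ = ∑ s, (∑' t, γ ^ t * pDist P μ π t s) * ∑ a, π s a * R s a := by
        rw [Summable.tsum_finsetSum fun s _ => (hsum s).mul_right _]
        exact sum_congr rfl fun s _ => tsum_mul_right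
    _ = _ := by
        simp only [dvisit, mul_assoc, ← mul_sum]
        rw [inv_mul_cancel_left₀ (sub_ne_zero.mpr hγ1.symm)]

end StateDistribution

theorem stmt_10_general {S A : Type*} [Fintype S] [Fintype A]
    (P : S → A → S → ℝ)
    (hP0 : ∀ s a s', 0 ≤ P s a s') (hP1 : ∀ s a, ∑ s', P s a s' = 1)
    (γ : ℝ) (hγ0 : 0 < γ) (hγ1 : γ < 1)
    (μ : S → ℝ) (hμ0 : ∀ s, 0 ≤ μ s) (hμ1 : ∑ s, μ s = 1)
    (πb : S → A → ℝ)
    (π : S → A → ℝ) (hπ0 : ∀ s a, 0 < π s a) (hπ1 : ∀ s, ∑ a, π s a = 1) :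
    Jret P μ γ (fun s a => Real.log (π s a / πb s a)) π =
      (1 - γ)⁻¹ * ∑ s, dvisit P μ γ π s * KL (π s) (πb s) :=
  Jret_eq_inv_mul_sum_dvisit hγ1.ne (fun s => summable_pow_mul_pDist hP0 hP1 hμ0 hμ1
    (fun s a => (hπ0 s a).le) hπ1 hγ0.le hγ1 s) _

/-- For an everywhere-positive behavior policy `π_b` and everywhere-positive policy `π`,
the return of `π` under its own policy-dependent reward `C_π(s,a) = log(π(s,a)/π_b(s,a))`
satisfies `J_{C_π}(π) = (1−γ)⁻¹ D^π_KL(π, π_b)`. -/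
theorem stmt_10 {S A : Type*} [Fintype S] [Fintype A] [Nonempty S] [Nonempty A]
    (P : S → A → S → ℝ)
    (hP0 : ∀ s a s', 0 ≤ P s a s') (hP1 : ∀ s a, ∑ s', P s a s' = 1)
    (γ : ℝ) (hγ0 : 0 < γ) (hγ1 : γ < 1)
    (μ : S → ℝ) (hμ0 : ∀ s, 0 ≤ μ s) (hμ1 : ∑ s, μ s = 1)
    (πb : S → A → ℝ) (hπb0 : ∀ s a, 0 < πb s a) (hπb1 : ∀ s, ∑ a, πb s a = 1)
    (π : S → A → ℝ) (hπ0 : ∀ s a, 0 < π s a) (hπ1 : ∀ s, ∑ a, π s a = 1) :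
    Jret P μ γ (fun s a => Real.log (π s a / πb s a)) π =
      (1 - γ)⁻¹ * ∑ s, dvisit P μ γ π s * KL (π s) (πb s) :=
  stmt_10_general P hP0 hP1 γ hγ0 hγ1 μ hμ0 hμ1 πb π hπ0 hπ1
end

section
/- (Optimal discriminator) Let X be a finite nonempty set and let p, q be probability distributions on X with p(x) > 0 and q(x) > 0 for all x. Then for every function B : X → (0,1), ∑_x p(x) log B(x) + ∑_x q(x) log(1 − B(x)) ≤ ∑_x p(x) log B*(x) + ∑_x q(x) log(1 − B*(x)), where B*(x) = p(x)/(p(x) + q(x)). -/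
open Real Finset

/-- Weighted form of `log x ≤ x - 1`, applied to `x = s * b / p`. -/
lemma mul_log_le_mul_log_div_add {p s b : ℝ} (hp : 0 < p) (hs : 0 < s) (hb : 0 < b) :
    p * log b ≤ p * log (p / s) + (s * b - p) := by
  have hlog : log b - log (p / s) = log (s * b / p) := by
    rw [← log_div hb.ne' (by positivity)]
    congr 1
    field_simp
  have hle : p * log (s * b / p) ≤ p * (s * b / p - 1) :=
    mul_le_mul_of_nonneg_left (log_le_sub_one_of_pos (by positivity)) hp.le
  have hcancel : p * (s * b / p - 1) = s * b - p := by field_simp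
  nlinarith

lemma mul_log_add_mul_log_one_sub_le {p q b : ℝ} (hp : 0 < p) (hq : 0 < q)
    (hb : b ∈ Set.Ioo (0 : ℝ) 1) :
    p * log b + q * log (1 - b) ≤
      p * log (p / (p + q)) + q * log (1 - p / (p + q)) := by
  have hpq : 0 < p + q := by linarith
  have hpb := mul_log_le_mul_log_div_add hp hpq hb.1
  have hqb := mul_log_le_mul_log_div_add hq hpq (sub_pos.2 hb.2)
  have hcompl : 1 - p / (p + q) = q / (p + q) := by field_simp; ring
  rw [hcompl]
  linarith

theorem stmt_14_general {X : Type*} [Fintype X]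
    (p q : X → ℝ) (hp0 : ∀ x, 0 < p x)
    (hq0 : ∀ x, 0 < q x)
    (B : X → ℝ) (hB : ∀ x, B x ∈ Set.Ioo (0 : ℝ) 1) :
    ∑ x, p x * Real.log (B x) + ∑ x, q x * Real.log (1 - B x) ≤
      ∑ x, p x * Real.log (p x / (p x + q x)) +
        ∑ x, q x * Real.log (1 - p x / (p x + q x)) := by
  simp only [← sum_add_distrib]
  exact sum_le_sum fun x _ => mul_log_add_mul_log_one_sub_le (hp0 x) (hq0 x) (hB x)

/-- **Optimal discriminator.** Let `X` be a finite nonempty set and `p, q` strictly positive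
probability distributions on `X`. Then for every `B : X → (0,1)`,
`∑_x p(x) log B(x) + ∑_x q(x) log(1 − B(x))
  ≤ ∑_x p(x) log B*(x) + ∑_x q(x) log(1 − B*(x))`,
where `B*(x) = p(x)/(p(x) + q(x))`. -/
theorem stmt_14 {X : Type*} [Fintype X] [Nonempty X]
    (p q : X → ℝ) (hp0 : ∀ x, 0 < p x) (hp1 : ∑ x, p x = 1)
    (hq0 : ∀ x, 0 < q x) (hq1 : ∑ x, q x = 1)
    (B : X → ℝ) (hB : ∀ x, B x ∈ Set.Ioo (0 : ℝ) 1) :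
    ∑ x, p x * Real.log (B x) + ∑ x, q x * Real.log (1 - B x) ≤
      ∑ x, p x * Real.log (p x / (p x + q x)) +
        ∑ x, q x * Real.log (1 - p x / (p x + q x)) :=
  stmt_14_general p q hp0 hq0 B hB
end
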